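/- The Jaccard distance on nonempty finite subsets of a finite type satisfies the triangle inequality: d(A,C) ≤ d(A,B) + d(B,C). -/

import Mathlib

/-
Write `d X Y = #((X ∪ Y) \ (X ∩ Y)) / #(X ∪ Y)` and `U = A ∪ B ∪ C`. Enlarging the universe from
`A ∪ C` to `U` can only increase the proportion of its elements lying outside `A ∩ C`, and each
such element of `U` lies in `A ∆ B` or in `B ∆ C`. Shrinking the universe back from `U` to `A ∪ B`
and to `B ∪ C` can only increase the proportions of these two symmetric differences.
-/

/-- Jaccard distance between finite sets, with the convention `d ∅ ∅ = 0`. -/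
def jaccardDist {α : Type*} [DecidableEq α] (A B : Finset α) : ℚ :=
  if A ∪ B = ∅ then 0 else 1 - ((A ∩ B).card : ℚ) / ((A ∪ B).card : ℚ)

open Finset

namespace Finset

variable {α : Type*}

theorem card_div_card_le_of_subset {S X Y : Finset α} (hSX : S ⊆ X) (hXY : X ⊆ Y) :
    (#S : ℚ) / #Y ≤ #S / #X := by
  rcases X.eq_empty_or_nonempty with rfl | hX
  · simp [subset_empty.mp hSX]
  · exact div_le_div_of_nonneg_left (by positivity) (by exact_mod_cast hX.card_pos)
      (by exact_mod_cast card_le_card hXY)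

variable [DecidableEq α]

theorem card_sdiff_div_card_eq_one_sub {K X : Finset α} (hKX : K ⊆ X) (hX : X.Nonempty) :
    (#(X \ K) : ℚ) / #X = 1 - #K / #X := by
  have hX : (#X : ℚ) ≠ 0 := by exact_mod_cast hX.card_pos.ne'
  rw [card_sdiff_of_subset hKX, Nat.cast_sub (card_le_card hKX)]
  field_simp

theorem card_sdiff_div_card_le_of_subset {K X Y : Finset α} (hKX : K ⊆ X) (hXY : X ⊆ Y) :
    (#(X \ K) : ℚ) / #X ≤ #(Y \ K) / #Y := by
  rcases X.eq_empty_or_nonempty with rfl | hX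
  · simp only [empty_sdiff, card_empty, Nat.cast_zero, div_zero]
    positivity
  · rw [card_sdiff_div_card_eq_one_sub hKX hX,
      card_sdiff_div_card_eq_one_sub (hKX.trans hXY) (hX.mono hXY)]
    exact sub_le_sub_left (card_div_card_le_of_subset hKX hXY) 1

theorem union_union_sdiff_inter_subset (A B C : Finset α) :
    (A ∪ B ∪ C) \ (A ∩ C) ⊆ (A ∪ B) \ (A ∩ B) ∪ (B ∪ C) \ (B ∩ C) := by
  intro x
  simp only [mem_sdiff, mem_union, mem_inter]
  tauto

end Finset

theorem jaccardDist_eq_card_sdiff_div {α : Type*} [DecidableEq α] (X Y : Finset α) :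
    jaccardDist X Y = (#((X ∪ Y) \ (X ∩ Y)) : ℚ) / #(X ∪ Y) := by
  unfold jaccardDist
  split_ifs with h
  · simp [h]
  · exact (card_sdiff_div_card_eq_one_sub inter_subset_union (nonempty_iff_ne_empty.mpr h)).symm

theorem jaccardDist_triangle_general {α : Type*} [DecidableEq α] (A B C : Finset α) :
    jaccardDist A C ≤ jaccardDist A B + jaccardDist B C := by
  simp only [jaccardDist_eq_card_sdiff_div]
  set U := A ∪ B ∪ C
  have hAC : A ∪ C ⊆ U :=
    union_subset (subset_union_left.trans subset_union_left) subset_union_right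
  have hAB : A ∪ B ⊆ U := subset_union_left
  have hBC : B ∪ C ⊆ U :=
    union_subset (subset_union_right.trans subset_union_left) subset_union_right
  calc (#((A ∪ C) \ (A ∩ C)) : ℚ) / #(A ∪ C)
      ≤ #(U \ (A ∩ C)) / #U := card_sdiff_div_card_le_of_subset inter_subset_union hAC
    _ ≤ (#((A ∪ B) \ (A ∩ B)) + #((B ∪ C) \ (B ∩ C))) / #U := by
        gcongr
        exact_mod_cast (card_le_card (union_union_sdiff_inter_subset A B C)).trans
          (card_union_le _ _)
    _ = #((A ∪ B) \ (A ∩ B)) / #U + #((B ∪ C) \ (B ∩ C)) / #U := add_div _ _ _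
    _ ≤ #((A ∪ B) \ (A ∩ B)) / #(A ∪ B) + #((B ∪ C) \ (B ∩ C)) / #(B ∪ C) :=
        add_le_add (card_div_card_le_of_subset sdiff_subset hAB)
          (card_div_card_le_of_subset sdiff_subset hBC)

/-- The Jaccard distance on nonempty finite sets satisfies the triangle inequality. -/
theorem jaccardDist_triangle {α : Type*} [DecidableEq α] (A B C : Finset α)
    (hA : A.Nonempty) (hB : B.Nonempty) (hC : C.Nonempty) :
    jaccardDist A C ≤ jaccardDist A B + jaccardDist B C :=
  jaccardDist_triangle_general A B C
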